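/- Let p be an s-map on a quantum logic L and x, y finite-spectrum discrete observables. Define centered observables g_x∘x and g_y∘y by shifting the spectra: g_z(t) = t − ν(z). Then c(x,y) = p(g_x∘x, g_y∘y). -/

import Mathlib

/-- A quantum logic: an orthomodular lattice. -/
class QuantumLogic (L : Type*) extends Lattice L, BoundedOrder L, Compl L where
  compl_compl : ∀ a : L, aᶜᶜ = a
  sup_compl : ∀ a : L, a ⊔ aᶜ = ⊤
  compl_le_compl : ∀ a b : L, a ≤ b → bᶜ ≤ aᶜ
  orthomodular : ∀ a b : L, a ≤ b → b = a ⊔ aᶜ ⊓ b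

section Defs
variable {L : Type*} [QuantumLogic L]

/-- Orthogonality: `a ⊥ b` iff `a ≤ bᶜ`. -/
def Orth (a b : L) : Prop := a ≤ bᶜ

/-- Compatibility: `a ↔ b` iff they decompose via mutually orthogonal elements. -/
def Compatible (a b : L) : Prop :=
  ∃ a₁ b₁ c : L, Orth a₁ b₁ ∧ Orth a₁ c ∧ Orth b₁ c ∧ a = a₁ ⊔ c ∧ b = b₁ ⊔ c

/-- An s-map on a quantum logic. -/
structure IsSMap (p : L → L → ℝ) : Prop where
  nonneg : ∀ a b, 0 ≤ p a b
  le_one : ∀ a b, p a b ≤ 1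
  top_top : p ⊤ ⊤ = 1
  orth_zero : ∀ a b, Orth a b → p a b = 0
  add_left : ∀ a b c, Orth a b → p (a ⊔ b) c = p a c + p b c
  add_right : ∀ a b c, Orth a b → p c (a ⊔ b) = p c a + p c b

/-- A conditional system in `L`. -/
def IsCondSystem (Lc : Set L) : Prop :=
  (⊥ : L) ∉ Lc ∧ (∀ a ∈ Lc, ∀ b ∈ Lc, a ⊔ b ∈ Lc) ∧
    ∀ a ∈ Lc, ∀ b ∈ Lc, a < b → aᶜ ⊓ b ∈ Lc

/-- A conditional state `f : L × L_c → [0,1]`. -/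
structure IsConditionalState (Lc : Set L) (f : L → L → ℝ) : Prop where
  nonneg : ∀ a b, b ∈ Lc → 0 ≤ f a b
  le_one : ∀ a b, b ∈ Lc → f a b ≤ 1
  state_bot : ∀ a ∈ Lc, f ⊥ a = 0
  state_top : ∀ a ∈ Lc, f ⊤ a = 1
  state_add : ∀ a ∈ Lc, ∀ b c : L, Orth b c → f (b ⊔ c) a = f b a + f c a
  diag : ∀ a ∈ Lc, f a a = 1
  cond : ∀ s : Finset L, (↑s : Set L) ⊆ Lc →
    (∀ a ∈ s, ∀ b ∈ s, a ≠ b → Orth a b) → s.sup id ∈ Lc →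
    ∀ d : L, f d (s.sup id) = ∑ a ∈ s, f a (s.sup id) * f d a

/-- A finite-spectrum discrete observable, given by its family of atoms
(mutually orthogonal events whose join is `⊤`). -/
def IsFinObs {n : ℕ} (e : Fin n → L) : Prop :=
  (∀ i j, i ≠ j → Orth (e i) (e j)) ∧ Finset.univ.sup e = ⊤

/-- Expectation `ν(x)` of a finite-spectrum observable with values `v` and events `e`
in the state `ν(b) = p(b,b)`. -/
noncomputable def nuObs (p : L → L → ℝ) {n : ℕ} (v : Fin n → ℝ) (e : Fin n → L) : ℝ :=
  ∑ i, v i * p (e i) (e i)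

/-- First joint moment `p(x,y)` of two finite-spectrum observables. -/
noncomputable def jointMoment (p : L → L → ℝ) {n m : ℕ} (xv : Fin n → ℝ) (xe : Fin n → L)
    (yv : Fin m → ℝ) (ye : Fin m → L) : ℝ :=
  ∑ i, ∑ j, xv i * yv j * p (xe i) (ye j)

/-- Covariance `c(x,y) = p(x,y) - ν(x)ν(y)`. -/
noncomputable def covObs (p : L → L → ℝ) {n m : ℕ} (xv : Fin n → ℝ) (xe : Fin n → L)
    (yv : Fin m → ℝ) (ye : Fin m → L) : ℝ :=
  jointMoment p xv xe yv ye - nuObs p xv xe * nuObs p yv ye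

end Defs

section Aux
variable {L : Type*} [QuantumLogic L]

lemma orth_symm {a b : L} (h : Orth a b) : Orth b a := by
  have := QuantumLogic.compl_le_compl _ _ h
  rw [QuantumLogic.compl_compl] at this
  exact this

lemma smap_sum_left (p : L → L → ℝ) (hp : IsSMap p) {n : ℕ} (e : Fin n → L)
    (he : ∀ i j, i ≠ j → Orth (e i) (e j)) (b : L) (s : Finset (Fin n)) :
    p (s.sup e) b = ∑ i ∈ s, p (e i) b := by
  induction s using Finset.cons_induction with
  | empty => simpa using hp.orth_zero ⊥ b (by simp [Orth])
  | cons a s ha ih =>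
    have horth : Orth (e a) (s.sup e) := by
      apply orth_symm
      exact Finset.sup_le fun j hj => he j a (fun h => ha (h ▸ hj))
    rw [Finset.sup_cons, Finset.sum_cons, ← ih, sup_comm,
      hp.add_left _ _ _ (orth_symm horth), add_comm]

lemma smap_sum_right (p : L → L → ℝ) (hp : IsSMap p) {n : ℕ} (e : Fin n → L)
    (he : ∀ i j, i ≠ j → Orth (e i) (e j)) (b : L) (s : Finset (Fin n)) :
    p b (s.sup e) = ∑ i ∈ s, p b (e i) := by
  induction s using Finset.cons_induction with
  | empty => simpa using hp.orth_zero b ⊥ (orth_symm (by simp [Orth]))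
  | cons a s ha ih =>
    have horth : Orth (e a) (s.sup e) := by
      apply orth_symm
      exact Finset.sup_le fun j hj => he j a (fun h => ha (h ▸ hj))
    rw [Finset.sup_cons, Finset.sum_cons, ← ih, sup_comm,
      hp.add_right _ _ _ (orth_symm horth), add_comm]

lemma orth_self_compl (b : L) : Orth b bᶜ := by
  rw [Orth, QuantumLogic.compl_compl]

lemma smap_top_left (p : L → L → ℝ) (hp : IsSMap p) (b : L) : p ⊤ b = p b b := by
  rw [← QuantumLogic.sup_compl b, hp.add_left _ _ _ (orth_self_compl b),
    hp.orth_zero bᶜ b (le_refl _), add_zero]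

lemma smap_top_right (p : L → L → ℝ) (hp : IsSMap p) (b : L) : p b ⊤ = p b b := by
  rw [← QuantumLogic.sup_compl b, hp.add_right _ _ _ (orth_self_compl b),
    hp.orth_zero b bᶜ (orth_self_compl b), add_zero]

end Aux

/-- `c(x,y) = p(g_x∘x, g_y∘y)` for the centered observables. -/
theorem smap_cov_centered {L : Type*} [QuantumLogic L] (p : L → L → ℝ)
    (hp : IsSMap p) {n m : ℕ} (xv : Fin n → ℝ) (xe : Fin n → L)
    (yv : Fin m → ℝ) (ye : Fin m → L)
    (hxv : Function.Injective xv) (hx : IsFinObs xe)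
    (hyv : Function.Injective yv) (hy : IsFinObs ye) :
    covObs p xv xe yv ye
      = jointMoment p (fun i => xv i - nuObs p xv xe) xe
          (fun j => yv j - nuObs p yv ye) ye := by

  have hxsum : ∀ b : L, ∑ i, p (xe i) b = p b b := fun b => by
    rw [← smap_sum_left p hp xe hx.1 b Finset.univ, hx.2, smap_top_left p hp]
  have hysum : ∀ a : L, ∑ j, p a (ye j) = p a a := fun a => by
    rw [← smap_sum_right p hp ye hy.1 a Finset.univ, hy.2, smap_top_right p hp]
  set X := nuObs p xv xe with hX
  set Y := nuObs p yv ye with hY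
  have hJ : (∑ i, ∑ j, p (xe i) (ye j)) = 1 := by
    have : ∀ i, ∑ j, p (xe i) (ye j) = p (xe i) (xe i) := fun i => hysum (xe i)
    simp_rw [this]
    calc ∑ i, p (xe i) (xe i) = ∑ i, p (xe i) ⊤ := by
          simp_rw [smap_top_right p hp]
      _ = p ⊤ ⊤ := by rw [hxsum ⊤, hp.top_top]
      _ = 1 := hp.top_top
  have h1 : (∑ i, ∑ j, yv j * p (xe i) (ye j)) = Y := by
    rw [Finset.sum_comm]
    simp_rw [← Finset.mul_sum, hxsum]
    rfl
  have h2 : (∑ i, ∑ j, xv i * p (xe i) (ye j)) = X := by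
    simp_rw [← Finset.mul_sum, hysum]
    rfl
  unfold covObs jointMoment
  have expand : ∀ i j, (xv i - X) * (yv j - Y) * p (xe i) (ye j)
      = xv i * yv j * p (xe i) (ye j) - X * (yv j * p (xe i) (ye j))
        - Y * (xv i * p (xe i) (ye j)) + X * Y * p (xe i) (ye j) := by
    intro i j; ring
  simp_rw [expand]
  simp_rw [Finset.sum_add_distrib, Finset.sum_sub_distrib]
  simp_rw [← Finset.mul_sum]
  simp_rw [hysum]
  have hone : ∑ i, p (xe i) (xe i) = 1 := by
    simp_rw [← smap_top_right p hp, hxsum ⊤, hp.top_top]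
  have hXdef : ∑ i, xv i * p (xe i) (xe i) = X := rfl
  rw [hone, hXdef, h1, ← hX, ← hY]
  ring
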